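/- Let F be a field, n > 0, and S be an optimal affine subspace of n×n matrices over F with direction (translation vector space) D. Let A ∈ S (so A is invertible), and let X ∈ F^n be a nonzero vector that is adapted to the trivial spectrum linear subspace {A⁻¹N : N ∈ D}. Then the linear subspace F·(A·X) + {N·X : N ∈ D} equals all of F^n; equivalently, the span over F of {M·X : M ∈ S} is F^n. -/

import Mathlib

/-!
Put `T = {A⁻¹N : N ∈ D}` and `x = X`: `T` is a trivial-spectrum space of endomorphisms of
`V = Fⁿ` of dimension `n(n-1)/2`, and `A` maps `F x + T x` onto `F (A x) + D x`. The elements of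
`T` killing `x` induce a trivial-spectrum space on `V ⧸ F x`, injectively because `x` is adapted.
Trivial-spectrum spaces on a `d`-dimensional space have dimension at most `d(d-1)/2`: by the same
quotient argument, by induction on `d`, once one knows that adapted vectors always exist. Hence by
rank–nullity `dim T x ≥ n(n-1)/2 - (n-1)(n-2)/2 = n - 1`, and `x ∉ T x` gives `F x + T x = V`.

Adapted vectors exist: otherwise every basis vector `bᵢ` is the image of some `rᵢ ⊗ bᵢ ∈ T` with
`rᵢ ≠ 0`. In the digraph `i → j :⇔ rᵢ(bⱼ) ≠ 0` every vertex has an out-neighbour, so some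
nonempty set `P` of vertices has exactly one out-neighbour in `P` each; then
`∑_{i ∈ P} rᵢ(v)⁻¹ • rᵢ ⊗ bᵢ ∈ T` fixes `v = ∑_{j ∈ P} bⱼ ≠ 0`.
-/

def IsOptimal {F : Type} [Field F] {s : ℕ}
    (W : AffineSubspace F (Matrix (Fin s) (Fin s) F)) : Prop :=
  (W : Set (Matrix (Fin s) (Fin s) F)).Nonempty ∧
    (∀ M ∈ W, IsUnit M) ∧
    Module.finrank F W.direction = s * (s - 1) / 2

theorem Nat.succ_choose_two (n : ℕ) : (n + 1).choose 2 = n + n.choose 2 := by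
  rw [Nat.choose_succ_succ, Nat.choose_one_right]

theorem Finset.exists_nonempty_forall_existsUnique_rel {ι : Type*} (R : ι → ι → Prop)
    (Q : Finset ι) (hQ : Q.Nonempty) (hR : ∀ i ∈ Q, ∃ j ∈ Q, R i j) :
    ∃ P : Finset ι, P.Nonempty ∧ ∀ i ∈ P, ∃! j, j ∈ P ∧ R i j := by
  classical
  induction Q using Finset.strongInduction with
  | H Q ih =>
  by_cases hsmaller : ∃ q ∈ Q, (Q.erase q).Nonempty ∧ ∀ i ∈ Q.erase q, ∃ j ∈ Q.erase q, R i j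
  · obtain ⟨q, hq, hne, hR'⟩ := hsmaller
    exact ih _ (Finset.erase_ssubset hq) hne hR'
  push Not at hsmaller
  refine ⟨Q, hQ, fun i hi => ?_⟩
  obtain ⟨j, hj, hij⟩ := hR i hi
  refine ⟨j, ⟨hj, hij⟩, fun j' ⟨hj', hij'⟩ => by_contra fun hne => ?_⟩
  -- By minimality of `Q`, every `q ∈ Q` is the only successor in `Q` of some `p q`;
  -- `p` is then a bijection of `Q`, so successors in `Q` are unique.
  have hpred : ∀ q ∈ Q, ∃ p ∈ Q, ∀ k ∈ Q, R p k ↔ k = q := by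
    intro q hq
    have hne' : (Q.erase q).Nonempty := by
      by_cases hjq : j = q
      · exact ⟨j', Finset.mem_erase.2 ⟨fun h => hne (h.trans hjq.symm), hj'⟩⟩
      · exact ⟨j, Finset.mem_erase.2 ⟨hjq, hj⟩⟩
    obtain ⟨p, hp, hpR⟩ := hsmaller q hq hne'
    have hpq : ∀ k ∈ Q, R p k → k = q := fun k hk hpk =>
      by_contra fun hkq => hpR k (Finset.mem_erase.2 ⟨hkq, hk⟩) hpk
    obtain ⟨k, hk, hpk⟩ := hR p (Finset.mem_of_mem_erase hp)
    exact ⟨p, Finset.mem_of_mem_erase hp, fun l hl =>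
      ⟨hpq l hl, fun hlq => hlq ▸ hpq k hk hpk ▸ hpk⟩⟩
  choose! p hpQ hpR using hpred
  obtain ⟨q, hq, rfl⟩ := Finset.surj_on_of_inj_on_of_card_le (fun q _ => p q) hpQ
    (fun q q' hq hq' (hpp : p q = p q') =>
      ((hpR q hq q' hq').1 (hpp ▸ (hpR q' hq' q' hq').2 rfl)).symm)
    le_rfl i hi
  exact hne (((hpR q hq j' hj').1 hij').trans ((hpR q hq j hj).1 hij).symm)

open Module Submodule

variable {F V : Type*} [Field F] [AddCommGroup V] [Module F V]

theorem finrank_quotient_span_singleton_add_one [FiniteDimensional F V] {x : V} (hx : x ≠ 0) :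
    finrank F (V ⧸ F ∙ x) + 1 = finrank F V := by
  rw [← finrank_span_singleton (K := F) hx]
  exact (F ∙ x).finrank_quotient_add_finrank

theorem LinearMap.exists_eq_smulRight_of_range_le {f : Module.End F V} {x : V} (hx : x ≠ 0)
    (hf : LinearMap.range f ≤ F ∙ x) : ∃ r : Module.Dual F V, f = r.smulRight x := by
  have hmem : ∀ v, f v ∈ F ∙ x := fun v => hf ⟨v, rfl⟩
  refine ⟨(LinearEquiv.coord F V x hx).toLinearMap ∘ₗ f.codRestrict _ hmem, ?_⟩
  ext v
  exact (LinearEquiv.coord_apply_smul F V x hx (f.codRestrict _ hmem v)).symm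

/-- As `S` is closed under scalar multiplication, excluding the eigenvalue `1` excludes every
nonzero eigenvalue. -/
def HasTrivialSpectrum (S : Submodule F (Module.End F V)) : Prop :=
  ∀ f ∈ S, ∀ v, f v = v → v = 0

def IsAdapted (S : Submodule F (Module.End F V)) (x : V) : Prop :=
  ∀ f ∈ S, f ≠ 0 → LinearMap.range f ≠ F ∙ x

def evalAt (S : Submodule F (Module.End F V)) (x : V) : S →ₗ[F] V :=
  (LinearMap.applyₗ x).domRestrict S

def quotientMap (S : Submodule F (Module.End F V)) (x : V) :
    LinearMap.ker (evalAt S x) →ₗ[F] Module.End F (V ⧸ F ∙ x) :=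
  mapQLinear _ _ ∘ₗ LinearMap.codRestrict _ (S.subtype ∘ₗ (LinearMap.ker (evalAt S x)).subtype)
    fun f => (span_singleton_le_iff_mem _ _).2 <| by
      simp [show (f : Module.End F V) x = 0 from f.2]

variable {S : Submodule F (Module.End F V)} {x : V}

@[simp]
theorem mem_range_evalAt {y : V} : y ∈ LinearMap.range (evalAt S x) ↔ ∃ f ∈ S, f x = y := by
  simp [evalAt]

@[simp]
theorem quotientMap_mk (f : LinearMap.ker (evalAt S x)) (v : V) :
    quotientMap S x f (Submodule.Quotient.mk v) = Submodule.Quotient.mk ((f : Module.End F V) v) :=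
  rfl

theorem IsAdapted.eq_zero_of_range_le (hxS : IsAdapted S x) (hx : x ≠ 0) {f : Module.End F V}
    (hf : f ∈ S) (hrange : LinearMap.range f ≤ F ∙ x) : f = 0 := by
  by_contra hf0
  refine ((nonzero_span_atom x hx).le_iff.1 hrange).elim (fun h => hf0 ?_) (hxS f hf hf0)
  exact LinearMap.range_eq_bot.1 h

theorem IsAdapted.quotientMap_injective (hxS : IsAdapted S x) (hx : x ≠ 0) :
    Function.Injective (quotientMap S x) := by
  refine (injective_iff_map_eq_zero _).2 fun f hf => ?_
  have hrange : LinearMap.range (f : Module.End F V) ≤ F ∙ x := by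
    rintro _ ⟨v, rfl⟩
    rw [← Submodule.Quotient.mk_eq_zero, ← quotientMap_mk, hf, LinearMap.zero_apply]
  exact Subtype.ext (Subtype.ext (hxS.eq_zero_of_range_le hx f.1.2 hrange))

namespace HasTrivialSpectrum

theorem exists_apply_sum_eq_zero (hS : HasTrivialSpectrum S) {ι : Type*} {P : Finset ι}
    (hP : P.Nonempty) {r : ι → Module.Dual F V} {x : ι → V}
    (hrx : ∀ i ∈ P, (r i).smulRight (x i) ∈ S) : ∃ i ∈ P, r i (∑ j ∈ P, x j) = 0 := by
  by_contra! h
  set v := ∑ j ∈ P, x j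
  have hfS : ∑ i ∈ P, (r i v)⁻¹ • (r i).smulRight (x i) ∈ S :=
    S.sum_mem fun i hi => S.smul_mem _ (hrx i hi)
  have hfix : (∑ i ∈ P, (r i v)⁻¹ • (r i).smulRight (x i)) v = v := by
    simp only [LinearMap.sum_apply, LinearMap.smul_apply, LinearMap.smulRight_apply, smul_smul]
    exact Finset.sum_congr rfl fun i hi => by rw [inv_mul_cancel₀ (h i hi), one_smul]
  obtain ⟨i, hi⟩ := hP
  exact h i hi (by rw [hS _ hfS v hfix, map_zero])

theorem exists_forall_apply_eq_zero (hS : HasTrivialSpectrum S) {ι : Type*} [Fintype ι]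
    [Nonempty ι] {r : ι → Module.Dual F V} {x : ι → V}
    (hrx : ∀ i, (r i).smulRight (x i) ∈ S) : ∃ i, ∀ j, r i (x j) = 0 := by
  by_contra! h
  obtain ⟨P, hP, hsucc⟩ := Finset.exists_nonempty_forall_existsUnique_rel
    (fun i j => r i (x j) ≠ 0) Finset.univ Finset.univ_nonempty (by simpa using h)
  obtain ⟨i, hi, hzero⟩ := hS.exists_apply_sum_eq_zero hP fun i _ => hrx i
  obtain ⟨j, ⟨hj, hij⟩, hunique⟩ := hsucc i hi
  rw [map_sum, Finset.sum_eq_single_of_mem j hj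
    fun k hk hkj => by_contra fun hik => hkj (hunique k ⟨hk, hik⟩)] at hzero
  exact hij hzero

theorem exists_isAdapted [FiniteDimensional F V] [Nontrivial V] (hS : HasTrivialSpectrum S) :
    ∃ x : V, x ≠ 0 ∧ IsAdapted S x := by
  by_contra! h
  let b := Module.finBasis F V
  have hrankOne : ∀ i, ∃ r : Module.Dual F V, r ≠ 0 ∧ r.smulRight (b i) ∈ S := by
    intro i
    obtain ⟨f, hfS, hf0, hrange⟩ : ∃ f ∈ S, f ≠ 0 ∧ LinearMap.range f = F ∙ b i := by
      simpa [IsAdapted] using h (b i) (b.ne_zero i)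
    obtain ⟨r, rfl⟩ := LinearMap.exists_eq_smulRight_of_range_le (b.ne_zero i) hrange.le
    exact ⟨r, by rintro rfl; simp at hf0, hfS⟩
  choose r hr0 hrS using hrankOne
  have : Nonempty (Fin (finrank F V)) := ⟨⟨0, finrank_pos⟩⟩
  obtain ⟨i, hi⟩ := hS.exists_forall_apply_eq_zero hrS
  exact hr0 i (b.ext fun j => by simpa using hi j)

theorem notMem_range_evalAt (hS : HasTrivialSpectrum S) (hx : x ≠ 0) :
    x ∉ LinearMap.range (evalAt S x) := by
  rw [mem_range_evalAt]
  rintro ⟨f, hf, hfx⟩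
  exact hx (hS f hf x hfx)

theorem range_quotientMap (hS : HasTrivialSpectrum S) (x : V) :
    HasTrivialSpectrum (LinearMap.range (quotientMap S x)) := by
  rintro _ ⟨f, rfl⟩ w hw
  obtain ⟨v, rfl⟩ := Submodule.Quotient.mk_surjective _ w
  rw [quotientMap_mk, Submodule.Quotient.eq] at hw
  obtain ⟨c, hc⟩ := mem_span_singleton.1 hw
  have hfix : (f : Module.End F V) (v + c • x) = v + c • x := by
    rw [map_add, map_smul, show (f : Module.End F V) x = 0 from f.2, smul_zero, add_zero, hc,
      add_sub_cancel]
  rw [Submodule.Quotient.mk_eq_zero, eq_neg_of_add_eq_zero_left (hS _ f.1.2 _ hfix)]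
  exact neg_mem (smul_mem _ _ (mem_span_singleton_self x))

theorem exists_finrank_eq [FiniteDimensional F V] (hS : HasTrivialSpectrum S) (hx : x ≠ 0)
    (hxS : IsAdapted S x) :
    ∃ T : Submodule F (Module.End F (V ⧸ F ∙ x)), HasTrivialSpectrum T ∧
      finrank F S = finrank F (LinearMap.range (evalAt S x)) + finrank F T :=
  ⟨_, hS.range_quotientMap x, by
    rw [LinearMap.finrank_range_of_inj (hxS.quotientMap_injective hx),
      LinearMap.finrank_range_add_finrank_ker]⟩

theorem finrank_le_choose_two [FiniteDimensional F V] (hS : HasTrivialSpectrum S) :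
    finrank F S ≤ (finrank F V).choose 2 := by
  obtain ⟨n, hn⟩ : ∃ n, finrank F V = n := ⟨_, rfl⟩
  rw [hn]
  induction n generalizing V with
  | zero => simpa [hn] using (Submodule.finrank_le S).trans_eq (finrank_linearMap F F V V)
  | succ n ih =>
    have : Nontrivial V := Module.nontrivial_of_finrank_eq_succ hn
    obtain ⟨x, hx, hxS⟩ := hS.exists_isAdapted
    obtain ⟨T, hT, hST⟩ := hS.exists_finrank_eq hx hxS
    have hquot := finrank_quotient_span_singleton_add_one (F := F) hx
    have hTle := ih hT (by omega)
    have hrange := Submodule.finrank_lt (s := LinearMap.range (evalAt S x)) fun h =>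
      hS.notMem_range_evalAt hx (h ▸ mem_top)
    rw [Nat.succ_choose_two]
    omega

theorem span_singleton_sup_range_evalAt [FiniteDimensional F V] (hS : HasTrivialSpectrum S)
    (hx : x ≠ 0) (hxS : IsAdapted S x) (hdim : (finrank F V).choose 2 ≤ finrank F S) :
    (F ∙ x) ⊔ LinearMap.range (evalAt S x) = ⊤ := by
  obtain ⟨T, hT, hST⟩ := hS.exists_finrank_eq hx hxS
  have hTle := hT.finrank_le_choose_two
  rw [← finrank_quotient_span_singleton_add_one (F := F) hx, Nat.succ_choose_two] at hdim
  have hlt : LinearMap.range (evalAt S x) < (F ∙ x) ⊔ LinearMap.range (evalAt S x) :=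
    lt_of_le_of_ne le_sup_right fun h =>
      hS.notMem_range_evalAt hx (h ▸ mem_sup_left (mem_span_singleton_self x))
  have hsup := Submodule.finrank_lt_finrank_of_lt hlt
  have hquot := finrank_quotient_span_singleton_add_one (F := F) hx
  apply eq_top_of_finrank_eq
  have := Submodule.finrank_le ((F ∙ x) ⊔ LinearMap.range (evalAt S x))
  omega

end HasTrivialSpectrum

section Matrix

open Matrix

variable {m : Type*} [Fintype m] [DecidableEq m]

noncomputable def invMulSubmodule (A : Matrix m m F) (D : Submodule F (Matrix m m F)) :
    Submodule F (Module.End F (m → F)) :=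
  D.map (toLin'.toLinearMap ∘ₗ LinearMap.mulLeft F A⁻¹)

theorem mem_invMulSubmodule {A : Matrix m m F} {D : Submodule F (Matrix m m F)}
    {f : Module.End F (m → F)} : f ∈ invMulSubmodule A D ↔ ∃ N ∈ D, toLin' (A⁻¹ * N) = f :=
  Iff.rfl

theorem finrank_invMulSubmodule {A : Matrix m m F} (hA : IsUnit A.det)
    (D : Submodule F (Matrix m m F)) : finrank F (invMulSubmodule A D) = finrank F D := by
  refine (LinearEquiv.finrank_eq (equivMapOfInjective _ (fun N N' h => ?_) D)).symm
  rw [← mul_nonsing_inv_cancel_left A N hA, ← mul_nonsing_inv_cancel_left A N' hA]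
  exact congrArg (A * ·) (toLin'.injective h)

theorem hasTrivialSpectrum_invMulSubmodule {S : AffineSubspace F (Matrix m m F)}
    (hunit : ∀ M ∈ S, IsUnit M) {A : Matrix m m F} (hA : A ∈ S) :
    HasTrivialSpectrum (invMulSubmodule A S.direction) := by
  rintro _ ⟨N, hN, rfl⟩ v hv
  have hAdet : IsUnit A.det := (isUnit_iff_isUnit_det A).1 (hunit A hA)
  have hAN : A - N ∈ S := by
    simpa [sub_eq_neg_add] using AffineSubspace.vadd_mem_of_mem_direction (neg_mem hN) hA
  have hNv : N *ᵥ v = A *ᵥ v := by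
    conv_lhs => rw [← mul_nonsing_inv_cancel_left A N hAdet, ← mulVec_mulVec]
    exact congrArg (A *ᵥ ·) hv
  refine mulVec_injective_iff_isUnit.2 (hunit _ hAN) ?_
  rw [sub_mulVec, hNv, sub_self, mulVec_zero]

theorem image_range_evalAt_invMulSubmodule {A : Matrix m m F} (hA : IsUnit A.det)
    (D : Submodule F (Matrix m m F)) (X : m → F) :
    A.mulVecLin '' (LinearMap.range (evalAt (invMulSubmodule A D) X)) =
      {Y | ∃ N ∈ D, N *ᵥ X = Y} := by
  ext Y
  simp only [Set.mem_image, SetLike.mem_coe, mem_range_evalAt, mem_invMulSubmodule,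
    exists_exists_and_eq_and, toLin'_apply, mulVecLin_apply, mulVec_mulVec,
    mul_nonsing_inv_cancel_left _ _ hA, Set.mem_ofPred_eq]

end Matrix

theorem stmt_18_general (F : Type) [Field F] (n : ℕ)
    (S : AffineSubspace F (Matrix (Fin n) (Fin n) F)) (hS : IsOptimal S)
    (A : Matrix (Fin n) (Fin n) F) (hA : A ∈ S)
    (X : Fin n → F) (hX : X ≠ 0)
    (hadapt : ∀ N ∈ S.direction, A⁻¹ * N ≠ 0 →
      LinearMap.range (A⁻¹ * N).mulVecLin ≠ Submodule.span F {X}) :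
    Submodule.span F
        ({A.mulVec X} ∪ {Y : Fin n → F | ∃ N ∈ S.direction, N.mulVec X = Y}) = ⊤ ∧
    Submodule.span F {Y : Fin n → F | ∃ M ∈ S, M.mulVec X = Y} = ⊤ := by
  obtain ⟨-, hunit, hdim⟩ := hS
  have hAdet : IsUnit A.det := (Matrix.isUnit_iff_isUnit_det A).1 (hunit A hA)
  have hXT : IsAdapted (invMulSubmodule A S.direction) X := by
    intro f hf hf0
    obtain ⟨N, hN, rfl⟩ := mem_invMulSubmodule.1 hf
    rw [Matrix.toLin'_apply'] at hf0 ⊢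
    exact hadapt N hN fun h => hf0 (by rw [h, Matrix.mulVecLin_zero])
  have htop := (hasTrivialSpectrum_invMulSubmodule hunit hA).span_singleton_sup_range_evalAt hX
    hXT (by rw [finrank_invMulSubmodule hAdet, hdim, Module.finrank_fin_fun, Nat.choose_two_right])
  have hfirst : span F ({A.mulVec X} ∪ {Y | ∃ N ∈ S.direction, N.mulVec X = Y}) = ⊤ := by
    rw [← image_range_evalAt_invMulSubmodule hAdet, ← Matrix.mulVecLin_apply,
      ← Set.image_singleton, ← Set.image_union, span_image, span_union, span_eq, htop,
      Submodule.map_top, LinearMap.range_eq_top]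
    exact Matrix.mulVec_surjective_iff_isUnit.2 (hunit A hA)
  refine ⟨hfirst, eq_top_iff.2 (hfirst ▸ span_le.2 ?_)⟩
  rintro _ (rfl | ⟨N, hN, rfl⟩)
  · exact subset_span ⟨A, hA, rfl⟩
  · have hNA : N + A ∈ S := AffineSubspace.vadd_mem_of_mem_direction hN hA
    rw [show N.mulVec X = (N + A).mulVec X - A.mulVec X by
      rw [Matrix.add_mulVec, add_sub_cancel_right]]
    exact sub_mem (subset_span ⟨_, hNA, rfl⟩) (subset_span ⟨A, hA, rfl⟩)

/-- Let S be an optimal affine subspace of n×n matrices over a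
field F with direction D, let A ∈ S, and let X ∈ F^n be a nonzero vector
adapted to the trivial spectrum subspace {A⁻¹N : N ∈ D}. Then
F·(A·X) + {N·X : N ∈ D} = F^n; equivalently, the span of {M·X : M ∈ S}
is all of F^n. -/
theorem stmt_18 (F : Type) [Field F] (n : ℕ) (hn : 0 < n)
    (S : AffineSubspace F (Matrix (Fin n) (Fin n) F)) (hS : IsOptimal S)
    (A : Matrix (Fin n) (Fin n) F) (hA : A ∈ S)
    (X : Fin n → F) (hX : X ≠ 0)
    (hadapt : ∀ N ∈ S.direction, A⁻¹ * N ≠ 0 →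
      LinearMap.range (A⁻¹ * N).mulVecLin ≠ Submodule.span F {X}) :
    Submodule.span F
        ({A.mulVec X} ∪ {Y : Fin n → F | ∃ N ∈ S.direction, N.mulVec X = Y}) = ⊤ ∧
    Submodule.span F {Y : Fin n → F | ∃ M ∈ S, M.mulVec X = Y} = ⊤ :=
  stmt_18_general F n S hS A hA X hX hadapt
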